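/- arXiv:2304.05374 — 7 statements merged into one kernel-verified Lean document; each statement's English description precedes it below -/
import Mathlib

section
/- Let α ≥ 4 and δ₁ ∈ (0,1) be suitable constants (e.g., δ₁ = 1/2 suffices for α large enough). Define the unstable cone C_u = {(x,y) ∈ ℝ² : |y| ≤ |x|/(α δ₁)}. Then for each of the four matrices A ∈ {[[1±α², ±α],[±α, 1]]} listed above (signs matching A₁,…,A₄), we have A(C_u) ⊆ C_u; that is, the unstable cone is forward invariant under all four matrices. -/
open Matrix

lemma key_cone (α x y a b : ℝ) (hα : 4 ≤ α) (h : |y| ≤ |x| / (α * (1/2)))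
    (ha : |a| ≤ α * |x| + |y|) (hb : (α^2 - 1) * |x| - α * |y| ≤ |b|) :
    |a| ≤ |b| / (α * (1/2)) := by
  have hαpos : (0:ℝ) < α * (1/2) := by linarith
  rw [le_div_iff₀ hαpos]
  rw [le_div_iff₀ hαpos] at h
  nlinarith [abs_nonneg x, abs_nonneg y, abs_nonneg a, abs_nonneg b]

lemma lower_add (p q : ℝ) : |p| - |q| ≤ |p + q| := by
  have h := abs_add_le (p + q) (-q)
  simp only [add_neg_cancel_right, abs_neg] at h
  linarith

lemma branch (α x y s t u : ℝ) (hα : 4 ≤ α) (h : |y| ≤ |x| / (α * (1/2)))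
    (hs : s = α ∨ s = -α) (ht : t = α ∨ t = -α)
    (hu : u = 1 + α^2 ∨ u = 1 - α^2) :
    |s * x + y| ≤ |u * x + t * y| / (α * (1/2)) := by
  have hα0 : (0:ℝ) < α := by linarith
  refine key_cone α x y _ _ hα h ?_ ?_
  · have hs' : |s * x| = α * |x| := by
      rcases hs with rfl | rfl <;>
        rw [abs_mul] <;> simp [abs_of_pos hα0]
    calc |s * x + y| ≤ |s * x| + |y| := abs_add_le _ _
      _ = α * |x| + |y| := by rw [hs']
  · refine le_trans ?_ (lower_add (u * x) (t * y))
    have ht' : |t * y| = α * |y| := by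
      rcases ht with rfl | rfl <;>
        rw [abs_mul] <;> simp [abs_of_pos hα0]
    have hu' : (α^2 - 1) * |x| ≤ |u * x| := by
      rcases hu with rfl | rfl <;> rw [abs_mul]
      · rw [abs_of_pos (show (0:ℝ) < 1 + α^2 by nlinarith)]
        nlinarith [abs_nonneg x]
      · rw [abs_of_neg (show 1 - α^2 < (0:ℝ) by nlinarith), neg_sub]
    linarith [hu', ht'.le, ht'.ge]

/-- for suitable constants `δ₁ ∈ (0,1)` and `α` large, the unstable
cone `C_u = {(x,y) : |y| ≤ |x|/(α δ₁)}` is forward invariant under each of the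
four matrices `A₁, …, A₄`. -/
theorem stmt1 :
    ∃ δ₁ ∈ Set.Ioo (0:ℝ) 1, ∃ α₀ : ℝ, 4 ≤ α₀ ∧
    ∀ α : ℝ, α₀ ≤ α →
    ∀ A ∈ ({!![1 + α^2, α; α, 1], !![1 - α^2, α; -α, 1],
            !![1 - α^2, -α; α, 1], !![1 + α^2, -α; -α, 1]} :
            Set (Matrix (Fin 2) (Fin 2) ℝ)),
    ∀ v : Fin 2 → ℝ, |v 1| ≤ |v 0| / (α * δ₁) →
      |(A.mulVec v) 1| ≤ |(A.mulVec v) 0| / (α * δ₁) := by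
  refine ⟨1/2, ⟨by norm_num, by norm_num⟩, 4, le_refl 4, ?_⟩
  intro α hα A hA v hv
  rcases hA with rfl | rfl | rfl | rfl
  · have e0 : ((!![1 + α^2, α; α, 1]).mulVec v) 0 = (1 + α^2) * v 0 + α * v 1 := by
      simp [Matrix.mulVec, dotProduct, Fin.sum_univ_two]
    have e1 : ((!![1 + α^2, α; α, 1]).mulVec v) 1 = α * v 0 + v 1 := by
      simp [Matrix.mulVec, dotProduct, Fin.sum_univ_two]
    rw [e0, e1]
    exact branch α (v 0) (v 1) α α (1 + α^2) hα hv (Or.inl rfl) (Or.inl rfl) (Or.inl rfl)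
  · have e0 : ((!![1 - α^2, α; -α, 1]).mulVec v) 0 = (1 - α^2) * v 0 + α * v 1 := by
      simp [Matrix.mulVec, dotProduct, Fin.sum_univ_two]
    have e1 : ((!![1 - α^2, α; -α, 1]).mulVec v) 1 = (-α) * v 0 + v 1 := by
      simp [Matrix.mulVec, dotProduct, Fin.sum_univ_two]
    rw [e0, e1]
    exact branch α (v 0) (v 1) (-α) α (1 - α^2) hα hv (Or.inr rfl) (Or.inl rfl) (Or.inr rfl)
  · have e0 : ((!![1 - α^2, -α; α, 1]).mulVec v) 0 = (1 - α^2) * v 0 + (-α) * v 1 := by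
      simp [Matrix.mulVec, dotProduct, Fin.sum_univ_two]
    have e1 : ((!![1 - α^2, -α; α, 1]).mulVec v) 1 = α * v 0 + v 1 := by
      simp [Matrix.mulVec, dotProduct, Fin.sum_univ_two]
    rw [e0, e1]
    exact branch α (v 0) (v 1) α (-α) (1 - α^2) hα hv (Or.inl rfl) (Or.inr rfl) (Or.inr rfl)
  · have e0 : ((!![1 + α^2, -α; -α, 1]).mulVec v) 0 = (1 + α^2) * v 0 + (-α) * v 1 := by
      simp [Matrix.mulVec, dotProduct, Fin.sum_univ_two]
    have e1 : ((!![1 + α^2, -α; -α, 1]).mulVec v) 1 = (-α) * v 0 + v 1 := by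
      simp [Matrix.mulVec, dotProduct, Fin.sum_univ_two]
    rw [e0, e1]
    exact branch α (v 0) (v 1) (-α) (-α) (1 + α^2) hα hv (Or.inr rfl) (Or.inr rfl) (Or.inl rfl)
end

section
/- Let α ≥ 4 and δ₁ ∈ (0,1) be suitable constants (e.g., δ₁ = 1/2 for α large). Define the stable cone C_s = {(x,y) ∈ ℝ² : |x| ≤ |y|/(α δ₁)}. Then for each matrix A among A₁ = [[1+α², α],[α, 1]], A₂ = [[1−α², α],[−α, 1]], A₃ = [[1−α², −α],[α, 1]], A₄ = [[1+α², −α],[−α, 1]], the inverse A⁻¹ maps C_s into C_s. -/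
open Matrix

lemma upper (a b x y : ℝ) : |a * x + b * y| ≤ |a| * |x| + |b| * |y| := by
  simpa [abs_mul] using abs_add_le (a * x) (b * y)

lemma lower (a b x y : ℝ) : |b| * |y| - |a| * |x| ≤ |a * x + b * y| := by
  have h := abs_sub_abs_le_abs_sub (b * y) (-(a * x))
  have : b * y - -(a * x) = a * x + b * y := by ring
  rw [this, abs_neg] at h
  simpa [abs_mul] using h

lemma key (α x y x' y' : ℝ) (hα : 4 ≤ α)
    (hv : |x| ≤ |y| / (α * (1/2)))
    (h1 : |x'| ≤ |x| + α * |y|) (h2 : (α^2 - 1) * |y| - α * |x| ≤ |y'|) :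
    |x'| ≤ |y'| / (α * (1/2)) := by
  have hα0 : (0:ℝ) < α * (1/2) := by nlinarith
  rw [le_div_iff₀ hα0] at hv ⊢
  nlinarith [abs_nonneg x, abs_nonneg y, abs_nonneg x',
    mul_nonneg (abs_nonneg y) (sq_nonneg α)]

/-- for suitable constants `δ₁ ∈ (0,1)` and `α` large, the stable
cone `C_s = {(x,y) : |x| ≤ |y|/(α δ₁)}` is mapped into itself by the inverse of
each of the four matrices `A₁, …, A₄`. -/
theorem stmt2 :
    ∃ δ₁ ∈ Set.Ioo (0:ℝ) 1, ∃ α₀ : ℝ, 4 ≤ α₀ ∧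
    ∀ α : ℝ, α₀ ≤ α →
    ∀ A ∈ ({!![1 + α^2, α; α, 1], !![1 - α^2, α; -α, 1],
            !![1 - α^2, -α; α, 1], !![1 + α^2, -α; -α, 1]} :
            Set (Matrix (Fin 2) (Fin 2) ℝ)),
    ∀ v : Fin 2 → ℝ, |v 0| ≤ |v 1| / (α * δ₁) →
      |(A⁻¹.mulVec v) 0| ≤ |(A⁻¹.mulVec v) 1| / (α * δ₁) := by
  refine ⟨1/2, ⟨by norm_num, by norm_num⟩, 4, le_refl 4, ?_⟩
  intro α hα A hA v hv
  have hα0 : (0:ℝ) < α := by linarith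
  have habs : |α| = α := abs_of_pos hα0
  have hneg : |(-α)| = α := by rw [abs_neg]; exact habs
  have h1p : |1 + α^2| = 1 + α^2 := abs_of_pos (by nlinarith)
  have h1m : |1 - α^2| = α^2 - 1 := by
    rw [abs_of_nonpos (by nlinarith)]; ring
  simp only [Set.mem_insert_iff, Set.mem_singleton_iff] at hA
  rcases hA with h | h | h | h <;> subst h
  · have hinv : (!![1 + α^2, α; α, 1])⁻¹ = !![1, -α; -α, 1 + α^2] := by
      apply inv_eq_right_inv
      ext i j; fin_cases i <;> fin_cases j <;>
        simp [Matrix.mul_apply, Fin.sum_univ_two] <;> ring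
    rw [hinv]
    simp only [mulVec, dotProduct, Fin.sum_univ_two, Matrix.cons_val', Matrix.cons_val_zero,
      Matrix.cons_val_one, Matrix.head_cons, Matrix.empty_val', Matrix.cons_val_fin_one,
      Matrix.head_fin_const, Matrix.of_apply]
    apply key α (v 0) (v 1) _ _ hα hv
    · rw [show (1:ℝ) * v 0 + -α * v 1 = 1 * v 0 + (-α) * v 1 by ring]
      have := upper 1 (-α) (v 0) (v 1)
      rw [hneg, abs_one] at this; linarith
    · rw [show -α * v 0 + (1 + α^2) * v 1 = (-α) * v 0 + (1 + α^2) * v 1 by ring]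
      have := lower (-α) (1 + α^2) (v 0) (v 1)
      rw [hneg, h1p] at this; nlinarith [abs_nonneg (v 1)]
  · have hinv : (!![1 - α^2, α; -α, 1])⁻¹ = !![1, -α; α, 1 - α^2] := by
      apply inv_eq_right_inv
      ext i j; fin_cases i <;> fin_cases j <;>
        simp [Matrix.mul_apply, Fin.sum_univ_two] <;> ring
    rw [hinv]
    simp only [mulVec, dotProduct, Fin.sum_univ_two, Matrix.cons_val', Matrix.cons_val_zero,
      Matrix.cons_val_one, Matrix.head_cons, Matrix.empty_val', Matrix.cons_val_fin_one,
      Matrix.head_fin_const, Matrix.of_apply]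
    apply key α (v 0) (v 1) _ _ hα hv
    · rw [show (1:ℝ) * v 0 + -α * v 1 = 1 * v 0 + (-α) * v 1 by ring]
      have := upper 1 (-α) (v 0) (v 1)
      rw [hneg, abs_one] at this; linarith
    · have := lower α (1 - α^2) (v 0) (v 1)
      rw [habs, h1m] at this; nlinarith [abs_nonneg (v 1)]
  · have hinv : (!![1 - α^2, -α; α, 1])⁻¹ = !![1, α; -α, 1 - α^2] := by
      apply inv_eq_right_inv
      ext i j; fin_cases i <;> fin_cases j <;>
        simp [Matrix.mul_apply, Fin.sum_univ_two] <;> ring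
    rw [hinv]
    simp only [mulVec, dotProduct, Fin.sum_univ_two, Matrix.cons_val', Matrix.cons_val_zero,
      Matrix.cons_val_one, Matrix.head_cons, Matrix.empty_val', Matrix.cons_val_fin_one,
      Matrix.head_fin_const, Matrix.of_apply]
    apply key α (v 0) (v 1) _ _ hα hv
    · have := upper 1 α (v 0) (v 1)
      rw [habs, abs_one] at this; linarith
    · rw [show -α * v 0 + (1 - α^2) * v 1 = (-α) * v 0 + (1 - α^2) * v 1 by ring]
      have := lower (-α) (1 - α^2) (v 0) (v 1)
      rw [hneg, h1m] at this; nlinarith [abs_nonneg (v 1)]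
  · have hinv : (!![1 + α^2, -α; -α, 1])⁻¹ = !![1, α; α, 1 + α^2] := by
      apply inv_eq_right_inv
      ext i j; fin_cases i <;> fin_cases j <;>
        simp [Matrix.mul_apply, Fin.sum_univ_two] <;> ring
    rw [hinv]
    simp only [mulVec, dotProduct, Fin.sum_univ_two, Matrix.cons_val', Matrix.cons_val_zero,
      Matrix.cons_val_one, Matrix.head_cons, Matrix.empty_val', Matrix.cons_val_fin_one,
      Matrix.head_fin_const, Matrix.of_apply]
    apply key α (v 0) (v 1) _ _ hα hv
    · have := upper 1 α (v 0) (v 1)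
      rw [habs, abs_one] at this; linarith
    · have := lower α (1 + α^2) (v 0) (v 1)
      rw [habs, h1p] at this; nlinarith [abs_nonneg (v 1)]
end

section
/- There exist constants δ₁ ∈ (0,1) and α₀ > 0 such that for all α ≥ α₀: for every v in the unstable cone C_u = {(x,y) : |y| ≤ |x|/(αδ₁)} and every matrix A among A₁,…,A₄ (the four shear products above), one has ‖A v‖ ≥ δ₁ α² ‖v‖. -/
open Matrix

/-- The Euclidean norm of a vector in ℝ². -/
noncomputable def en (v : Fin 2 → ℝ) : ℝ := Real.sqrt (v 0 ^ 2 + v 1 ^ 2)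

lemma key_sq (α a b c v0 v1 : ℝ) (hα : 10 ≤ α)
    (ha : a = 1 + α^2 ∨ a = 1 - α^2) (hb : b = α ∨ b = -α)
    (hv : |v1| ≤ |v0| / (α * (1/2))) :
    ((1/2) * α^2)^2 * (v0^2 + v1^2) ≤ (a*v0 + b*v1)^2 + (c*v0 + v1)^2 := by
  have hαpos : (0:ℝ) < α := by linarith
  have h1 : α * |v1| ≤ 2 * |v0| := by
    have h := (le_div_iff₀ (by positivity : (0:ℝ) < α * (1/2))).mp hv
    nlinarith [abs_nonneg v1]
  have h2 : α^2 * v1^2 ≤ 4 * v0^2 := by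
    have := mul_self_le_mul_self (by positivity : (0:ℝ) ≤ α * |v1|) h1
    nlinarith [sq_abs v0, sq_abs v1]
  have h3 : -(2 * v0^2) ≤ α * (v0 * v1) ∧ α * (v0 * v1) ≤ 2 * v0^2 := by
    have habs : |α * (v0 * v1)| ≤ 2 * v0^2 := by
      rw [abs_mul, abs_of_pos hαpos, abs_mul]
      calc α * (|v0| * |v1|) = |v0| * (α * |v1|) := by ring
        _ ≤ |v0| * (2 * |v0|) := mul_le_mul_of_nonneg_left h1 (abs_nonneg v0)
        _ = 2 * v0^2 := by rw [← sq_abs v0]; ring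
    exact abs_le.mp habs
  obtain ⟨h3a, h3b⟩ := h3
  have hα2 : (100:ℝ) ≤ α^2 := by nlinarith
  have hαsq : (0:ℝ) ≤ α^2 := by positivity
  rcases ha with ha | ha <;> rcases hb with hb | hb <;> rw [ha, hb] <;>
    nlinarith [sq_nonneg (c*v0 + v1), sq_nonneg v0, sq_nonneg v1,
      sq_nonneg (α^2 - 100),
      mul_le_mul_of_nonneg_left h3b hαsq,
      mul_le_mul_of_nonneg_left h3a hαsq,
      mul_le_mul_of_nonneg_left h2 hαsq,
      mul_le_mul_of_nonneg_right hα2 (sq_nonneg v0)]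

lemma key_s3 (α a b c v0 v1 : ℝ) (hα : 10 ≤ α)
    (ha : a = 1 + α^2 ∨ a = 1 - α^2) (hb : b = α ∨ b = -α)
    (hv : |v1| ≤ |v0| / (α * (1/2))) :
    (1/2) * α^2 * Real.sqrt (v0^2 + v1^2) ≤
      Real.sqrt ((a*v0 + b*v1)^2 + (c*v0 + v1)^2) := by
  have h0 : (0:ℝ) ≤ (1/2) * α^2 := by positivity
  have : (1/2) * α^2 * Real.sqrt (v0^2 + v1^2)
      = Real.sqrt (((1/2) * α^2)^2 * (v0^2 + v1^2)) := by
    rw [Real.sqrt_mul (sq_nonneg _), Real.sqrt_sq h0]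
  rw [this]
  exact Real.sqrt_le_sqrt (key_sq α a b c v0 v1 hα ha hb hv)

/-- there exist `δ₁ ∈ (0,1)` and `α₀ > 0` such that for all
`α ≥ α₀`, every vector in the unstable cone is expanded by each of the four
matrices by at least the factor `δ₁ α²`. -/
theorem stmt3 :
    ∃ δ₁ ∈ Set.Ioo (0:ℝ) 1, ∃ α₀ : ℝ, 0 < α₀ ∧
    ∀ α : ℝ, α₀ ≤ α →
    ∀ A ∈ ({!![1 + α^2, α; α, 1], !![1 - α^2, α; -α, 1],
            !![1 - α^2, -α; α, 1], !![1 + α^2, -α; -α, 1]} :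
            Set (Matrix (Fin 2) (Fin 2) ℝ)),
    ∀ v : Fin 2 → ℝ, |v 1| ≤ |v 0| / (α * δ₁) →
      δ₁ * α^2 * en v ≤ en (A.mulVec v) := by
  refine ⟨1/2, ⟨by norm_num, by norm_num⟩, 10, by norm_num, ?_⟩
  intro α hα A hA v hv
  have hen : ∀ a b c : ℝ,
      en ((!![a, b; c, 1]).mulVec v) =
        Real.sqrt ((a * v 0 + b * v 1)^2 + (c * v 0 + v 1)^2) := by
    intro a b c
    have h00 : (!![a, b; c, (1:ℝ)]) 0 0 = a := rfl
    have h01 : (!![a, b; c, (1:ℝ)]) 0 1 = b := rfl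
    have h10 : (!![a, b; c, (1:ℝ)]) 1 0 = c := rfl
    have h11 : (!![a, b; c, (1:ℝ)]) 1 1 = 1 := rfl
    simp only [en, Matrix.mulVec, dotProduct, Fin.sum_univ_two,
      h00, h01, h10, h11]
    congr 1
    ring
  simp only [Set.mem_insert_iff, Set.mem_singleton_iff] at hA
  rcases hA with h | h | h | h <;> subst h <;> rw [hen] <;> unfold en
  · exact key_s3 α (1 + α^2) α α (v 0) (v 1) hα (Or.inl rfl) (Or.inl rfl) hv
  · exact key_s3 α (1 - α^2) α (-α) (v 0) (v 1) hα (Or.inr rfl) (Or.inl rfl) hv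
  · exact key_s3 α (1 - α^2) (-α) α (v 0) (v 1) hα (Or.inr rfl) (Or.inr rfl) hv
  · exact key_s3 α (1 + α^2) (-α) (-α) (v 0) (v 1) hα (Or.inl rfl) (Or.inr rfl) hv
end

section
/- (Doeblin's theorem, quantitative form) Let X be a Polish space with Borel σ-algebra, Q a Markov transition kernel on X, and suppose there exist λ ∈ (0,1) and a Borel probability measure μ such that Q(x,·) ≥ λ μ(·) for every x ∈ X. Then there is a unique invariant probability measure μ* for Q, and for every bounded Borel measurable f : X → ℝ and every n ∈ ℕ, ‖Qⁿf − ∫ f dμ*‖_∞ ≤ 2(1−λ)ⁿ ‖f‖_∞. -/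
open MeasureTheory ProbabilityTheory

/-- Iterates of a Markov transition kernel: `iterKernel κ n = κⁿ`. -/
noncomputable def iterKernel {X : Type*} [MeasurableSpace X]
    (κ : Kernel X X) : ℕ → Kernel X X
  | 0 => Kernel.id
  | n + 1 => κ.comp (iterKernel κ n)

open Set Filter Topology
open scoped ENNReal

/-! The minorization `ν ≤ κ x` splits every step of the chain as `κ = η + ν`, with a residual
kernel `η` of mass `1 - ν(X)`. Since `κ x` and `κ y` share the common part `ν`, integrating a
function of oscillation `D` against them gives values at most `(1 - ν(X)) D` apart, so the
oscillation of `κⁿ f` decays like `(1 - ν(X))ⁿ`. Averaging over an invariant probability measure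
turns this into the uniform bound, and letting `n → ∞` for indicator functions gives uniqueness.
An invariant measure is the regeneration series `∑ₙ ηⁿ ν`: applying `κ = η + ν` to it shifts the
series by one step and adds back its first term `ν`. -/

section Oscillation

variable {X : Type*} [MeasurableSpace X]

lemma integrable_of_measurable_of_abs_le {ξ : Measure X} [IsFiniteMeasure ξ] {f : X → ℝ}
    (hf : Measurable f) {M : ℝ} (hfM : ∀ x, |f x| ≤ M) : Integrable f ξ :=
  .of_bound hf.aestronglyMeasurable M (ae_of_all _ hfM)

lemma abs_integral_le_of_forall_abs_le {ξ : Measure X} [IsProbabilityMeasure ξ] {f : X → ℝ}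
    {M : ℝ} (hfM : ∀ x, |f x| ≤ M) : |∫ x, f x ∂ξ| ≤ M := by
  simpa using norm_integral_le_of_norm_le_const (μ := ξ) (f := f) (ae_of_all _ hfM)

lemma abs_integral_sub_le_of_forall_abs_sub_le {ξ : Measure X} [IsProbabilityMeasure ξ]
    {g : X → ℝ} (hg : Integrable g ξ) {c C : ℝ} (h : ∀ x, |g x - c| ≤ C) :
    |∫ x, g x ∂ξ - c| ≤ C := by
  have hsub : ∫ x, g x ∂ξ - c = ∫ x, (g x - c) ∂ξ := by
    rw [integral_sub hg (integrable_const c), integral_const, probReal_univ, one_smul]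
  simpa [hsub] using norm_integral_le_of_norm_le_const (μ := ξ) (f := fun x => g x - c)
    (ae_of_all _ h)

lemma abs_integral_sub_integral_le_of_measureReal_univ_eq {p q : Measure X}
    [IsFiniteMeasure p] [IsFiniteMeasure q] (hpq : p.real univ = q.real univ)
    {f : X → ℝ} (hfp : Integrable f p) (hfq : Integrable f q) {D : ℝ}
    (hD : ∀ x y, |f x - f y| ≤ D) :
    |∫ x, f x ∂p - ∫ x, f x ∂q| ≤ p.real univ * D := by
  set m := p.real univ
  rcases measureReal_nonneg.eq_or_lt with hm | hm
  · have hp : p = 0 := Measure.measure_univ_eq_zero.1 ((measureReal_eq_zero_iff).1 hm.symm)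
    have hq : q = 0 :=
      Measure.measure_univ_eq_zero.1 ((measureReal_eq_zero_iff).1 (hm.trans hpq).symm)
    simp [m, hp, hq]
  have hdouble : ∫ u, ∫ v, (f u - f v) ∂q ∂p = m * (∫ x, f x ∂p - ∫ x, f x ∂q) := by
    have hinner : ∀ u, ∫ v, (f u - f v) ∂q = m * f u - ∫ v, f v ∂q := fun u => by
      rw [integral_sub (integrable_const _) hfq, integral_const, smul_eq_mul, ← hpq, mul_comm]
    simp_rw [hinner]
    rw [integral_sub (hfp.const_mul m) (integrable_const _), integral_const_mul, integral_const,
      smul_eq_mul, mul_sub]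
  have hbound : |∫ u, ∫ v, (f u - f v) ∂q ∂p| ≤ D * m * m := by
    refine norm_integral_le_of_norm_le_const (f := fun u => ∫ v, (f u - f v) ∂q)
      (ae_of_all _ fun u => ?_)
    simpa [hpq] using norm_integral_le_of_norm_le_const (μ := q) (f := fun v => f u - f v)
      (ae_of_all _ (hD u))
  rw [hdouble, abs_mul, abs_of_pos hm] at hbound
  exact le_of_mul_le_mul_left (by linarith) hm

lemma integral_eq_integral_sub_add {p ν : Measure X} [IsFiniteMeasure ν] (hνp : ν ≤ p)
    {f : X → ℝ} (hf : Integrable f p) :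
    ∫ x, f x ∂p = ∫ x, f x ∂(p - ν) + ∫ x, f x ∂ν := by
  conv_lhs => rw [← Measure.sub_add_cancel_of_le hνp]
  exact integral_add_measure (hf.mono_measure Measure.sub_le) (hf.mono_measure hνp)

lemma measureReal_sub_univ {p ν : Measure X} [IsProbabilityMeasure p] [IsFiniteMeasure ν]
    (hνp : ν ≤ p) : (p - ν).real univ = 1 - ν.real univ := by
  rw [measureReal_def, Measure.sub_apply MeasurableSet.univ hνp, measure_univ,
    ENNReal.toReal_sub_of_le (by simpa using hνp univ) ENNReal.one_ne_top, ENNReal.toReal_one,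
    measureReal_def]

lemma abs_integral_sub_integral_le_of_le {p q ν : Measure X} [IsProbabilityMeasure p]
    [IsProbabilityMeasure q] [IsFiniteMeasure ν] (hνp : ν ≤ p) (hνq : ν ≤ q) {f : X → ℝ}
    (hfp : Integrable f p) (hfq : Integrable f q) {D : ℝ} (hD : ∀ x y, |f x - f y| ≤ D) :
    |∫ x, f x ∂p - ∫ x, f x ∂q| ≤ (1 - ν.real univ) * D := by
  rw [integral_eq_integral_sub_add hνp hfp, integral_eq_integral_sub_add hνq hfq,
    add_sub_add_right_eq_sub, ← measureReal_sub_univ hνp]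
  exact abs_integral_sub_integral_le_of_measureReal_univ_eq
    ((measureReal_sub_univ hνp).trans (measureReal_sub_univ hνq).symm)
    (hfp.mono_measure Measure.sub_le) (hfq.mono_measure Measure.sub_le) hD

end Oscillation

lemma MeasureTheory.Measure.integral_comp {α β E : Type*} [MeasurableSpace α]
    [MeasurableSpace β] [NormedAddCommGroup E] [NormedSpace ℝ E] {ξ : Measure α}
    {κ : Kernel α β} {f : β → E} (hf : Integrable f (κ ∘ₘ ξ)) :
    ∫ y, f y ∂(κ ∘ₘ ξ) = ∫ x, ∫ y, f y ∂κ x ∂ξ := by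
  rw [Measure.comp_eq_comp_const_apply] at hf ⊢
  rw [Kernel.integral_comp hf, Kernel.const_apply]

section Iterates

variable {X : Type*} [MeasurableSpace X] {κ : Kernel X X}

instance isMarkovKernel_iterKernel [IsMarkovKernel κ] (n : ℕ) :
    IsMarkovKernel (iterKernel κ n) := by
  induction n with
  | zero => exact inferInstanceAs (IsMarkovKernel Kernel.id)
  | succ n ih => exact inferInstanceAs (IsMarkovKernel (κ ∘ₖ iterKernel κ n))

lemma integral_iterKernel_zero {f : X → ℝ} (hf : Measurable f) (x : X) :
    ∫ y, f y ∂iterKernel κ 0 x = f x := by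
  rw [iterKernel, Kernel.id_apply, integral_dirac' _ _ hf.stronglyMeasurable]

lemma integral_iterKernel_succ [IsMarkovKernel κ] {f : X → ℝ} (hf : Measurable f) {M : ℝ}
    (hfM : ∀ x, |f x| ≤ M) (n : ℕ) (x : X) :
    ∫ y, f y ∂iterKernel κ (n + 1) x = ∫ z, ∫ y, f y ∂κ z ∂iterKernel κ n x :=
  Kernel.integral_comp (integrable_of_measurable_of_abs_le hf hfM)

lemma integrable_integral_kernel {η : Kernel X X} [IsMarkovKernel η] {ξ : Measure X}
    [IsFiniteMeasure ξ] {f : X → ℝ} (hf : Measurable f) {M : ℝ} (hfM : ∀ x, |f x| ≤ M) :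
    Integrable (fun x => ∫ y, f y ∂η x) ξ :=
  integrable_of_measurable_of_abs_le hf.stronglyMeasurable.integral_kernel.measurable
    fun _ => abs_integral_le_of_forall_abs_le hfM

lemma comp_iterKernel_of_comp_eq {ξ : Measure X} (hξ : κ ∘ₘ ξ = ξ) (n : ℕ) :
    iterKernel κ n ∘ₘ ξ = ξ := by
  induction n with
  | zero => exact Measure.id_comp
  | succ n ih => rw [iterKernel, ← Measure.comp_assoc, ih, hξ]

lemma integral_iterKernel_of_comp_eq [IsMarkovKernel κ] {ξ : Measure X}
    [IsProbabilityMeasure ξ] (hξ : κ ∘ₘ ξ = ξ) {f : X → ℝ} (hf : Measurable f) {M : ℝ}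
    (hfM : ∀ x, |f x| ≤ M) (n : ℕ) :
    ∫ x, ∫ y, f y ∂iterKernel κ n x ∂ξ = ∫ y, f y ∂ξ := by
  conv_rhs => rw [← comp_iterKernel_of_comp_eq hξ n]
  exact (Measure.integral_comp (integrable_of_measurable_of_abs_le hf hfM)).symm

end Iterates

section Minorization

variable {X : Type*} [MeasurableSpace X] {κ : Kernel X X} [IsMarkovKernel κ]

lemma measure_univ_le_one_of_forall_le {ν : Measure X} (hν : ∀ x, ν ≤ κ x) : ν univ ≤ 1 := by
  rcases isEmpty_or_nonempty X with hX | ⟨⟨x⟩⟩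
  · simp [Measure.eq_zero_of_isEmpty ν]
  · exact (hν x univ).trans_eq measure_univ

variable {ν : Measure X} [IsFiniteMeasure ν]

lemma abs_integral_iterKernel_sub_le (hν : ∀ x, ν ≤ κ x) {f : X → ℝ} (hf : Measurable f)
    {M : ℝ} (hfM : ∀ x, |f x| ≤ M) {D : ℝ} (hD : ∀ x y, |f x - f y| ≤ D) (n : ℕ) (x y : X) :
    |∫ z, f z ∂iterKernel κ n x - ∫ z, f z ∂iterKernel κ n y| ≤ (1 - ν.real univ) ^ n * D := by
  induction n generalizing f D with
  | zero => simpa [integral_iterKernel_zero hf] using hD x y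
  | succ n ih =>
    have hκfD : ∀ z w, |∫ y, f y ∂κ z - ∫ y, f y ∂κ w| ≤ (1 - ν.real univ) * D :=
      fun z w => abs_integral_sub_integral_le_of_le (hν z) (hν w)
        (integrable_of_measurable_of_abs_le hf hfM) (integrable_of_measurable_of_abs_le hf hfM) hD
    rw [integral_iterKernel_succ hf hfM, integral_iterKernel_succ hf hfM, pow_succ, mul_assoc]
    exact ih hf.stronglyMeasurable.integral_kernel.measurable
      (fun z => abs_integral_le_of_forall_abs_le hfM) hκfD

lemma abs_integral_iterKernel_sub_integral_le (hν : ∀ x, ν ≤ κ x) {ξ : Measure X}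
    [IsProbabilityMeasure ξ] (hξ : κ ∘ₘ ξ = ξ) {f : X → ℝ} (hf : Measurable f) {M : ℝ}
    (hfM : ∀ x, |f x| ≤ M) (n : ℕ) (x : X) :
    |∫ y, f y ∂iterKernel κ n x - ∫ y, f y ∂ξ| ≤ 2 * (1 - ν.real univ) ^ n * M := by
  have hD : ∀ z w, |f z - f w| ≤ 2 * M := fun z w => by
    linarith [abs_sub (f z) (f w), hfM z, hfM w]
  rw [← integral_iterKernel_of_comp_eq hξ hf hfM n, abs_sub_comm]
  refine abs_integral_sub_le_of_forall_abs_sub_le (integrable_integral_kernel hf hfM)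
    fun z => ?_
  linarith [abs_integral_iterKernel_sub_le hν hf hfM hD n z x]

lemma eq_of_comp_eq_of_comp_eq (hν : ∀ x, ν ≤ κ x) (hν₀ : ν univ ≠ 0) {ξ ξ' : Measure X}
    [IsProbabilityMeasure ξ] [IsProbabilityMeasure ξ'] (hξ : κ ∘ₘ ξ = ξ)
    (hξ' : κ ∘ₘ ξ' = ξ') :
    ξ = ξ' := by
  ext s hs
  have hf : Measurable (s.indicator (1 : X → ℝ)) := measurable_const.indicator hs
  have hfM : ∀ x, |s.indicator (1 : X → ℝ) x| ≤ 1 := fun x => by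
    by_cases hx : x ∈ s <;> simp [hx]
  have hclose (n : ℕ) : |ξ.real s - ξ'.real s| ≤ 2 * (1 - ν.real univ) ^ n * 1 := by
    rw [← integral_indicator_one hs, ← integral_indicator_one hs,
      ← integral_iterKernel_of_comp_eq hξ hf hfM n]
    exact abs_integral_sub_le_of_forall_abs_sub_le (integrable_integral_kernel hf hfM)
      fun z => abs_integral_iterKernel_sub_integral_le hν hξ' hf hfM n z
  have hν_pos : 0 < ν.real univ := ENNReal.toReal_pos hν₀ (measure_ne_top ν univ)
  have hν_le : ν.real univ ≤ 1 := ENNReal.toReal_le_of_le_ofReal zero_le_one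
    (by simpa using measure_univ_le_one_of_forall_le hν)
  have hlim : Tendsto (fun n : ℕ => 2 * (1 - ν.real univ) ^ n * 1) atTop (𝓝 0) := by
    simpa using (tendsto_pow_atTop_nhds_zero_of_lt_one (r := 1 - ν.real univ) (by linarith)
      (by linarith)).const_mul 2
  rw [← measureReal_eq_measureReal_iff]
  exact sub_eq_zero.1 (abs_nonpos_iff.1 (ge_of_tendsto' hlim hclose))

end Minorization

noncomputable def residualKernel {α β : Type*} [MeasurableSpace α] [MeasurableSpace β]
    (κ : Kernel α β) (ν : Measure β) [IsFiniteMeasure ν] (hν : ∀ a, ν ≤ κ a) : Kernel α β where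
  toFun a := κ a - ν
  measurable' := Measure.measurable_of_measurable_coe _ fun s hs => by
    simp_rw [Measure.sub_apply hs (hν _)]
    exact (κ.measurable_coe hs).sub_const _

section Regeneration

variable {X : Type*} [MeasurableSpace X] {κ : Kernel X X} {ν : Measure X} [IsFiniteMeasure ν]
  (hν : ∀ x, ν ≤ κ x)

lemma residualKernel_add_const : residualKernel κ ν hν + Kernel.const X ν = κ := by
  ext1 x
  exact Measure.sub_add_cancel_of_le (hν x)

lemma residualKernel_apply_univ [IsMarkovKernel κ] (x : X) :
    residualKernel κ ν hν x univ = 1 - ν univ :=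
  (Measure.sub_apply MeasurableSet.univ (hν x)).trans (by rw [measure_univ])

noncomputable def doeblinMeasure (κ : Kernel X X) (ν : Measure X) [IsFiniteMeasure ν]
    (hν : ∀ x, ν ≤ κ x) : Measure X :=
  Measure.sum fun n => (fun m => residualKernel κ ν hν ∘ₘ m)^[n] ν

lemma residualKernel_iterate_apply_univ [IsMarkovKernel κ] (n : ℕ) :
    ((fun m => residualKernel κ ν hν ∘ₘ m)^[n] ν) univ = (1 - ν univ) ^ n * ν univ := by
  induction n with
  | zero => simp
  | succ n ih =>
    rw [Function.iterate_succ_apply',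
      Measure.bind_apply MeasurableSet.univ (Kernel.aemeasurable _)]
    simp_rw [residualKernel_apply_univ hν]
    rw [lintegral_const, ih, pow_succ, mul_assoc, mul_comm]
    ring

lemma isProbabilityMeasure_doeblinMeasure [IsMarkovKernel κ] (hν₀ : ν univ ≠ 0) :
    IsProbabilityMeasure (doeblinMeasure κ ν hν) := by
  constructor
  rw [doeblinMeasure, Measure.sum_apply _ MeasurableSet.univ]
  simp_rw [residualKernel_iterate_apply_univ hν]
  rw [ENNReal.tsum_mul_right, ENNReal.tsum_geometric,
    ENNReal.sub_sub_cancel ENNReal.one_ne_top (measure_univ_le_one_of_forall_le hν),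
    ENNReal.inv_mul_cancel hν₀ (measure_ne_top ν univ)]

lemma comp_doeblinMeasure [IsMarkovKernel κ] (hν₀ : ν univ ≠ 0) :
    κ ∘ₘ doeblinMeasure κ ν hν = doeblinMeasure κ ν hν := by
  have hprob := isProbabilityMeasure_doeblinMeasure hν hν₀
  set ρ : ℕ → Measure X := fun n => (fun m => residualKernel κ ν hν ∘ₘ m)^[n] ν
  calc κ ∘ₘ doeblinMeasure κ ν hν
      = residualKernel κ ν hν ∘ₘ doeblinMeasure κ ν hν
          + Kernel.const X ν ∘ₘ doeblinMeasure κ ν hν := by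
        rw [← Measure.add_comp, residualKernel_add_const]
    _ = Measure.sum (fun n => ρ (n + 1)) + ν := by
        rw [Measure.const_comp, measure_univ, one_smul, doeblinMeasure,
          Measure.bind_sum _ _ (Kernel.aemeasurable _)]
        simp_rw [ρ, Function.iterate_succ_apply']
    _ = doeblinMeasure κ ν hν := by
        ext s hs
        rw [Measure.add_apply, doeblinMeasure, Measure.sum_apply _ hs, Measure.sum_apply _ hs,
          tsum_eq_zero_add' (f := fun n => ρ n s) ENNReal.summable]
        exact add_comm _ _

end Regeneration

theorem stmt5_general {X : Type*} [MeasurableSpace X]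
    (κ : Kernel X X) [IsMarkovKernel κ]
    (lam : ℝ) (hlam : lam ∈ Set.Ioo (0:ℝ) 1)
    (μ : Measure X) [IsProbabilityMeasure μ]
    (hminor : ∀ x : X, ∀ s : Set X, MeasurableSet s →
      ENNReal.ofReal lam * μ s ≤ κ x s) :
    ∃ μstar : Measure X, IsProbabilityMeasure μstar ∧
      μstar.bind (fun x => κ x) = μstar ∧
      (∀ ν : Measure X, IsProbabilityMeasure ν →
        ν.bind (fun x => κ x) = ν → ν = μstar) ∧
      ∀ f : X → ℝ, Measurable f → ∀ M : ℝ, (∀ x, |f x| ≤ M) →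
        ∀ (n : ℕ) (x : X),
          |(∫ y, f y ∂(iterKernel κ n x)) - ∫ y, f y ∂μstar| ≤
            2 * (1 - lam)^n * M := by
  set ν := ENNReal.ofReal lam • μ
  have hν_fin : IsFiniteMeasure ν := ⟨by simp [ν]⟩
  have hν : ∀ x, ν ≤ κ x := fun x => Measure.le_iff.2 (hminor x)
  have hν₀ : ν univ ≠ 0 := by simp [ν, hlam.1]
  have hν_real : ν.real univ = lam := by simp [ν, measureReal_def, hlam.1.le]
  have hprob := isProbabilityMeasure_doeblinMeasure hν hν₀
  refine ⟨doeblinMeasure κ ν hν, hprob, comp_doeblinMeasure hν hν₀,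
    fun ξ _ hξ => eq_of_comp_eq_of_comp_eq hν hν₀ hξ (comp_doeblinMeasure hν hν₀),
    fun f hf M hfM n x => ?_⟩
  simpa [hν_real] using
    abs_integral_iterKernel_sub_integral_le hν (comp_doeblinMeasure hν hν₀) hf hfM n x

/-- Doeblin's theorem, quantitative form: if a Markov kernel `κ`
on a Polish space satisfies the minorization `κ x · ≥ λ μ ·` for a probability
measure `μ` and some `λ ∈ (0,1)`, then `κ` has a unique invariant probability
measure `μ*`, and for every bounded measurable `f` and all `n`,
`‖κⁿ f − ∫ f dμ*‖_∞ ≤ 2 (1−λ)ⁿ ‖f‖_∞`. -/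
theorem stmt5 {X : Type*} [MeasurableSpace X] [TopologicalSpace X]
    [PolishSpace X] [BorelSpace X]
    (κ : Kernel X X) [IsMarkovKernel κ]
    (lam : ℝ) (hlam : lam ∈ Set.Ioo (0:ℝ) 1)
    (μ : Measure X) [IsProbabilityMeasure μ]
    (hminor : ∀ x : X, ∀ s : Set X, MeasurableSet s →
      ENNReal.ofReal lam * μ s ≤ κ x s) :
    ∃ μstar : Measure X, IsProbabilityMeasure μstar ∧
      μstar.bind (fun x => κ x) = μstar ∧
      (∀ ν : Measure X, IsProbabilityMeasure ν →
        ν.bind (fun x => κ x) = ν → ν = μstar) ∧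
      ∀ f : X → ℝ, Measurable f → ∀ M : ℝ, (∀ x, |f x| ≤ M) →
        ∀ (n : ℕ) (x : X),
          |(∫ y, f y ∂(iterKernel κ n x)) - ∫ y, f y ∂μstar| ≤
            2 * (1 - lam)^n * M :=
  stmt5_general κ lam hlam μ hminor
end

section
/- Let Q be a Markov kernel on a Polish space X preserving a probability measure m, with transition densities pₙ(x,·) with respect to m (so Qⁿf(x) = ∫ pₙ(x,y) f(y) m(dy) and ∫ pₙ(x,y) m(dx) = 1 for all y). Suppose that for some n ∈ ℕ and ε > 0, sup_x ∫ |pₙ(x,y) − 1| m(dy) ≤ ε. Then for every mean-zero f ∈ L²(m), ‖Qⁿ f‖_{L²(m)} ≤ √(2ε) ‖f‖_{L²(m)}. -/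
/-!
Since `∫ f dm = 0`, `Qⁿ f (x) = ∫ (pₙ(x,y) - 1) f(y) m(dy)`: on mean-zero functions `Qⁿ` is the
integral operator with kernel `k = pₙ - 1`. The rows of `|k|` have `m`-integral at most `ε` by
hypothesis, and its columns at most `2`, because `|pₙ - 1| ≤ pₙ + 1` and `∫ pₙ(x,y) m(dx) = 1`.
The Schur test then bounds the `L²` operator norm by `√(ε · 2)`: Cauchy–Schwarz for the splitting
`|k| |f| = √|k| · (√|k| |f|)` gives `|Qⁿ f (x)|² ≤ ε ∫ |k(x,y)| f(y)² m(dy)`, and integrating in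
`x` with Tonelli uses the column bound.
-/

open MeasureTheory Function
open scoped ENNReal NNReal

theorem ENNReal.rpow_one_half_sq (x : ℝ≥0∞) : (x ^ (1 / 2 : ℝ)) ^ 2 = x := by
  rw [← ENNReal.rpow_natCast, ← ENNReal.rpow_mul]
  norm_num

section

variable {X Y : Type*} [MeasurableSpace X] [MeasurableSpace Y] {μ : Measure X} {ν : Measure Y}

theorem eLpNorm_two_sq_eq_lintegral {F : Type*} [ENorm F] (f : X → F) :
    eLpNorm f 2 μ ^ 2 = ∫⁻ x, ‖f x‖ₑ ^ 2 ∂μ := by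
  simpa [ENNReal.rpow_two] using eLpNorm_nnreal_pow_eq_lintegral (f := f) (μ := μ) two_ne_zero

theorem integral_sub_of_integral_eq_zero {E : Type*} [NormedAddCommGroup E] [NormedSpace ℝ E]
    {f g : X → E} (hg : Integrable g μ) (hg0 : ∫ x, g x ∂μ = 0) :
    ∫ x, (f x - g x) ∂μ = ∫ x, f x ∂μ := by
  by_cases hf : Integrable f μ
  · rw [integral_sub hf hg, hg0, sub_zero]
  · rw [integral_undef hf,
      integral_undef fun hfg => hf ((hfg.add hg).congr (.of_forall fun x => sub_add_cancel _ _))]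

theorem lintegral_enorm_sub_one_le_two [IsProbabilityMeasure μ] {p : X → ℝ} (hp : ∀ x, 0 ≤ p x)
    (hp1 : ∫ x, p x ∂μ = 1) : ∫⁻ x, ‖p x - 1‖ₑ ∂μ ≤ 2 := by
  have hp_int : Integrable p μ := .of_integral_ne_zero (by simp [hp1])
  calc ∫⁻ x, ‖p x - 1‖ₑ ∂μ
      ≤ ∫⁻ x, (‖p x‖ₑ + 1) ∂μ := lintegral_mono fun x => enorm_sub_le.trans_eq (by simp)
    _ = ENNReal.ofReal (∫ x, ‖p x‖ ∂μ) + 1 := by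
        rw [lintegral_add_right _ measurable_const, ofReal_integral_norm_eq_lintegral_enorm hp_int]
        simp
    _ = 2 := by
        simp_rw [Real.norm_of_nonneg (hp _), hp1]
        norm_num

theorem sq_lintegral_mul_le_lintegral_mul_lintegral_mul_sq {a c : Y → ℝ≥0∞}
    (ha : AEMeasurable a ν) (hc : AEMeasurable c ν) :
    (∫⁻ y, a y * c y ∂ν) ^ 2 ≤ (∫⁻ y, a y ∂ν) * ∫⁻ y, a y * c y ^ 2 ∂ν := by
  set r : Y → ℝ≥0∞ := fun y => a y ^ (1 / 2 : ℝ)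
  have hr_sq (y : Y) : r y ^ 2 = a y := ENNReal.rpow_one_half_sq (a y)
  have hr : AEMeasurable r ν := ha.pow_const _
  have hCS := ENNReal.lintegral_mul_le_Lp_mul_Lq ν Real.HolderConjugate.two_two hr (hr.mul hc)
  simp only [Pi.mul_apply, ← mul_assoc, ENNReal.rpow_two, mul_pow, ← sq, hr_sq] at hCS
  calc (∫⁻ y, a y * c y ∂ν) ^ 2
      ≤ ((∫⁻ y, a y ∂ν) ^ (1 / 2 : ℝ) * (∫⁻ y, a y * c y ^ 2 ∂ν) ^ (1 / 2 : ℝ)) ^ 2 := by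
        gcongr
    _ = (∫⁻ y, a y ∂ν) * ∫⁻ y, a y * c y ^ 2 ∂ν := by
        rw [mul_pow, ENNReal.rpow_one_half_sq, ENNReal.rpow_one_half_sq]

theorem lintegral_sq_lintegral_mul_le [SFinite μ] [SFinite ν] {K : X → Y → ℝ≥0∞}
    (hK : Measurable (uncurry K)) {A B : ℝ≥0∞} (hrow : ∀ x, ∫⁻ y, K x y ∂ν ≤ A)
    (hcol : ∀ y, ∫⁻ x, K x y ∂μ ≤ B) {c : Y → ℝ≥0∞} (hc : AEMeasurable c ν) :
    ∫⁻ x, (∫⁻ y, K x y * c y ∂ν) ^ 2 ∂μ ≤ A * B * ∫⁻ y, c y ^ 2 ∂ν := by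
  calc ∫⁻ x, (∫⁻ y, K x y * c y ∂ν) ^ 2 ∂μ
      ≤ ∫⁻ x, A * ∫⁻ y, K x y * c y ^ 2 ∂ν ∂μ := by
        refine lintegral_mono fun x => ?_
        grw [sq_lintegral_mul_le_lintegral_mul_lintegral_mul_sq hK.of_uncurry_left.aemeasurable hc,
          hrow x]
    _ = A * ∫⁻ y, (∫⁻ x, K x y ∂μ) * c y ^ 2 ∂ν := by
        have hKc : AEMeasurable (uncurry fun x y => K x y * c y ^ 2) (μ.prod ν) :=
          hK.aemeasurable.mul (hc.pow_const 2).comp_snd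
        rw [lintegral_const_mul'' _ hKc.lintegral_prod_right, lintegral_lintegral_swap hKc]
        congr 1
        exact lintegral_congr fun y => lintegral_mul_const _ hK.of_uncurry_right
    _ ≤ A * B * ∫⁻ y, c y ^ 2 ∂ν := by
        rw [mul_assoc, ← lintegral_const_mul'' _ (hc.pow_const 2)]
        gcongr with y
        exact hcol y

theorem eLpNorm_integral_smul_le {E : Type*} [NormedAddCommGroup E] [NormedSpace ℝ E]
    [SFinite μ] [SFinite ν] {k : X → Y → ℝ} (hk : Measurable (uncurry k)) {A B : ℝ≥0∞}
    (hrow : ∀ x, ∫⁻ y, ‖k x y‖ₑ ∂ν ≤ A) (hcol : ∀ y, ∫⁻ x, ‖k x y‖ₑ ∂μ ≤ B) {g : Y → E}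
    (hg : AEStronglyMeasurable g ν) :
    eLpNorm (fun x => ∫ y, k x y • g y ∂ν) 2 μ ≤ (A * B) ^ (1 / 2 : ℝ) * eLpNorm g 2 ν := by
  have hsq : eLpNorm (fun x => ∫ y, k x y • g y ∂ν) 2 μ ^ 2 ≤ A * B * eLpNorm g 2 ν ^ 2 := by
    rw [eLpNorm_two_sq_eq_lintegral, eLpNorm_two_sq_eq_lintegral]
    calc ∫⁻ x, ‖∫ y, k x y • g y ∂ν‖ₑ ^ 2 ∂μ
        ≤ ∫⁻ x, (∫⁻ y, ‖k x y‖ₑ * ‖g y‖ₑ ∂ν) ^ 2 ∂μ := by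
          gcongr with x
          exact (enorm_integral_le_lintegral_enorm _).trans_eq (by simp_rw [enorm_smul])
      _ ≤ A * B * ∫⁻ y, ‖g y‖ₑ ^ 2 ∂ν :=
          lintegral_sq_lintegral_mul_le hk.enorm hrow hcol hg.enorm
  rwa [← ENNReal.pow_le_pow_left_iff two_ne_zero, mul_pow, ENNReal.rpow_one_half_sq]

end

/-- if a Markov kernel with invariant probability measure `m` has
`n`-step transition densities `p` (rows and columns integrating to 1) with
`sup_x ∫ |p(x,y) − 1| dm(y) ≤ ε`, then for every mean-zero `f ∈ L²(m)`,
`‖Qⁿ f‖_{L²} ≤ √(2ε) ‖f‖_{L²}`. -/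
theorem stmt6 {X : Type*} [MeasurableSpace X]
    (m : Measure X) [IsProbabilityMeasure m]
    (p : X → X → ℝ) (hpmeas : Measurable (Function.uncurry p))
    (hpnn : ∀ x y, 0 ≤ p x y)
    (hrow : ∀ x, ∫ y, p x y ∂m = 1)
    (hcol : ∀ y, ∫ x, p x y ∂m = 1)
    (ε : ℝ) (hε : 0 < ε)
    (hsup : ∀ x, ∫ y, |p x y - 1| ∂m ≤ ε)
    (f : X → ℝ) (hf : MemLp f 2 m) (hmean : ∫ x, f x ∂m = 0) :
    eLpNorm (fun x => ∫ y, p x y * f y ∂m) 2 m ≤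
      ENNReal.ofReal (Real.sqrt (2 * ε)) * eLpNorm f 2 m := by
  have hcentered (x : X) : ∫ y, p x y * f y ∂m = ∫ y, (p x y - 1) • f y ∂m := by
    simp_rw [smul_eq_mul, sub_one_mul]
    exact (integral_sub_of_integral_eq_zero (hf.integrable one_le_two) hmean).symm
  have hrow_enorm (x : X) : ∫⁻ y, ‖p x y - 1‖ₑ ∂m ≤ ENNReal.ofReal ε := by
    have hpx : Integrable (fun y => p x y - 1) m :=
      (Integrable.of_integral_ne_zero (by simp [hrow x])).sub (integrable_const 1)
    rw [← ofReal_integral_norm_eq_lintegral_enorm hpx]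
    exact ENNReal.ofReal_le_ofReal (hsup x)
  have hcol_enorm (y : X) : ∫⁻ x, ‖p x y - 1‖ₑ ∂m ≤ 2 :=
    lintegral_enorm_sub_one_le_two (hpnn · y) (hcol y)
  calc eLpNorm (fun x => ∫ y, p x y * f y ∂m) 2 m
      = eLpNorm (fun x => ∫ y, (p x y - 1) • f y ∂m) 2 m := by simp_rw [hcentered]
    _ ≤ (ENNReal.ofReal ε * 2) ^ (1 / 2 : ℝ) * eLpNorm f 2 m :=
        eLpNorm_integral_smul_le (hpmeas.sub_const 1) hrow_enorm hcol_enorm hf.1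
    _ = ENNReal.ofReal (Real.sqrt (2 * ε)) * eLpNorm f 2 m := by
        rw [← ENNReal.ofReal_ofNat 2, ← ENNReal.ofReal_mul hε.le, mul_comm ε, Real.sqrt_eq_rpow,
          ENNReal.ofReal_rpow_of_nonneg (by positivity) (by norm_num)]
end

section
/- Let T : 𝕋² → 𝕋² be an invertible Lebesgue-measure-preserving map and λ ∈ (0,1). Fix N and suppose m(T^{−n}(R) ∩ Q) ≥ λ m(R)m(Q) for all dyadic squares R, Q of side 2^{−N}. Let f = Σ_i c_i χ_{R_i} be a mean-zero simple function constant on the squares R_i of side 2^{−N}. Then for every square R_k of side 2^{−N}: |(1/m(R_k)) ∫_{R_k} f∘Tⁿ dm| ≤ (1−λ) ‖f‖_{L^∞}. -/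
/-!
Write `f = Σ cᵢ 1_{Rᵢ}` and `aᵢ = m(T⁻ⁿRᵢ ∩ R_k)`, so that `∫_{R_k} f ∘ Tⁿ = Σ cᵢ aᵢ`.
Since `Σ cᵢ m(Rᵢ) = 0`, this sum is unchanged when each `aᵢ` is replaced by
`aᵢ - λ m(Rᵢ) m(R_k)`. The mixing hypothesis makes these reduced masses nonnegative, and they
add up to `(1 - λ) m(R_k)`, so the sum is at most `(1 - λ) m(R_k) max |cᵢ|` in absolute value.
-/

open MeasureTheory

/-- The two-dimensional torus `𝕋² = ℝ²/ℤ²`. -/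
abbrev Torus : Type := AddCircle (1:ℝ) × AddCircle (1:ℝ)

/-- The dyadic square of side `2^{-N}` with lower-left corner `(j/2^N, k/2^N)`. -/
def dyadicSquare (N : ℕ) (j k : Fin (2 ^ N)) : Set Torus :=
  {p | ∃ x y : ℝ, p = ((x : AddCircle (1:ℝ)), (y : AddCircle (1:ℝ))) ∧
    x ∈ Set.Ico ((j : ℝ) / 2 ^ N) (((j : ℝ) + 1) / 2 ^ N) ∧
    y ∈ Set.Ico ((k : ℝ) / 2 ^ N) (((k : ℝ) + 1) / 2 ^ N)}

open Set Function

lemma abs_sum_mul_le_of_sum_mul_eq_zero {ι : Type*} [Fintype ι] {c w a : ι → ℝ} {M t : ℝ}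
    (hc : ∀ i, |c i| ≤ M) (hmean : ∑ i, c i * w i = 0) (ha : ∀ i, t * w i ≤ a i) :
    |∑ i, c i * a i| ≤ M * (∑ i, a i - t * ∑ i, w i) := by
  have hshift : ∑ i, c i * a i = ∑ i, c i * (a i - t * w i) := by
    have : ∑ i, c i * (t * w i) = t * ∑ i, c i * w i := by
      rw [Finset.mul_sum]; exact Finset.sum_congr rfl fun i _ => by ring
    rw [Finset.sum_congr rfl fun i _ => mul_sub (c i) (a i) (t * w i), Finset.sum_sub_distrib,
      this, hmean, mul_zero, sub_zero]
  calc |∑ i, c i * a i| = |∑ i, c i * (a i - t * w i)| := by rw [hshift]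
    _ ≤ ∑ i, |c i| * (a i - t * w i) := by
        refine (Finset.abs_sum_le_sum_abs _ _).trans_eq (Finset.sum_congr rfl fun i _ => ?_)
        rw [abs_mul, abs_of_nonneg (sub_nonneg.2 (ha i))]
    _ ≤ ∑ i, M * (a i - t * w i) :=
        Finset.sum_le_sum fun i _ => mul_le_mul_of_nonneg_right (hc i) (sub_nonneg.2 (ha i))
    _ = M * (∑ i, a i - t * ∑ i, w i) := by
        rw [← Finset.mul_sum, Finset.sum_sub_distrib, Finset.mul_sum]

section Partition

variable {α β ι : Type*} [Fintype ι] {P : ι → Set α}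

lemma sum_mul_indicator_one_of_mem (hP : Pairwise (Disjoint on P)) (c : ι → ℝ) {i : ι} {z : α}
    (hz : z ∈ P i) : ∑ j, c j * (P j).indicator 1 z = c i := by
  rw [Finset.sum_eq_single i (fun j _ hji => ?_) (by simp), indicator_of_mem hz, Pi.one_apply,
    mul_one]
  rw [indicator_of_notMem (disjoint_left.1 (hP hji.symm) hz), mul_zero]

lemma abs_le_iSup_abs_sum_mul_indicator_one (hP : Pairwise (Disjoint on P))
    (hcover : ⋃ i, P i = univ) (c : ι → ℝ) {i : ι} (hi : (P i).Nonempty) :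
    |c i| ≤ ⨆ z, |∑ j, c j * (P j).indicator 1 z| := by
  have hrange : range (fun z => |∑ j, c j * (P j).indicator 1 z|) ⊆ range fun j => |c j| := by
    rintro _ ⟨z, rfl⟩
    obtain ⟨j, hz⟩ := mem_iUnion.1 (hcover.symm ▸ mem_univ z : z ∈ ⋃ i, P i)
    exact ⟨j, by simp only [sum_mul_indicator_one_of_mem hP c hz]⟩
  obtain ⟨z, hz⟩ := hi
  calc |c i| = |∑ j, c j * (P j).indicator 1 z| := by rw [sum_mul_indicator_one_of_mem hP c hz]
    _ ≤ _ := le_ciSup ((finite_range _).subset hrange).bddAbove z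

variable [MeasurableSpace α] [MeasurableSpace β]

lemma setIntegral_sum_mul_indicator_one_comp {μ : Measure β} [IsFiniteMeasure μ]
    (hPm : ∀ i, MeasurableSet (P i)) {g : β → α} (hg : Measurable g) (s : Set β) (c : ι → ℝ) :
    ∫ z in s, ∑ i, c i * (P i).indicator 1 (g z) ∂μ = ∑ i, c i * μ.real (g ⁻¹' P i ∩ s) := by
  have hind : ∀ i, (fun z => (P i).indicator (1 : α → ℝ) (g z)) = (g ⁻¹' P i).indicator 1 :=
    fun i => funext fun z => (indicator_comp_right g).symm
  have hint : ∀ i, Integrable (fun z => (P i).indicator (1 : α → ℝ) (g z)) (μ.restrict s) :=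
    fun i => by
      rw [hind i]
      exact (integrable_indicator_iff (hg (hPm i))).2 integrableOn_const
  rw [integral_finsetSum _ fun i _ => (hint i).const_mul (c i)]
  refine Finset.sum_congr rfl fun i _ => ?_
  rw [integral_const_mul, hind i, integral_indicator_one (hg (hPm i)),
    measureReal_restrict_apply (hg (hPm i))]

lemma sum_measureReal_preimage_inter {μ : Measure β} [IsFiniteMeasure μ]
    (hP : Pairwise (Disjoint on P)) (hcover : ⋃ i, P i = univ) (hPm : ∀ i, MeasurableSet (P i))
    {g : β → α} (hg : Measurable g) (s : Set β) :
    ∑ i, μ.real (g ⁻¹' P i ∩ s) = μ.real s := by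
  have hone : ∀ z, ∑ i, 1 * (P i).indicator (1 : α → ℝ) (g z) = 1 := fun z => by
    obtain ⟨i, hi⟩ := mem_iUnion.1 (hcover.symm ▸ mem_univ (g z) : g z ∈ ⋃ i, P i)
    exact sum_mul_indicator_one_of_mem hP (fun _ => 1) hi
  calc ∑ i, μ.real (g ⁻¹' P i ∩ s) = ∑ i, 1 * μ.real (g ⁻¹' P i ∩ s) := by simp only [one_mul]
    _ = ∫ z in s, 1 ∂μ := by
        rw [← setIntegral_sum_mul_indicator_one_comp hPm hg s fun _ => 1]
        simp only [hone]
    _ = μ.real s := by simp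

theorem abs_setAverage_sum_mul_indicator_one_comp_le {μ : Measure α} [IsProbabilityMeasure μ]
    (hP : Pairwise (Disjoint on P)) (hcover : ⋃ i, P i = univ) (hPm : ∀ i, MeasurableSet (P i))
    (hP0 : ∀ i, (P i).Nonempty) {g : α → α} (hg : Measurable g) {s : Set α} (hs : μ.real s ≠ 0)
    {lam : ℝ} (hmix : ∀ i, lam * μ.real (P i) * μ.real s ≤ μ.real (g ⁻¹' P i ∩ s))
    (c : ι → ℝ) (hmean : ∫ z, ∑ i, c i * (P i).indicator 1 z ∂μ = 0) :
    |(μ.real s)⁻¹ * ∫ z in s, ∑ i, c i * (P i).indicator 1 (g z) ∂μ| ≤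
      (1 - lam) * ⨆ z, |∑ i, c i * (P i).indicator 1 z| := by
  set M := ⨆ z, |∑ i, c i * (P i).indicator 1 z|
  have hw : ∑ i, c i * μ.real (P i) = 0 := by
    rw [← hmean, ← setIntegral_univ]
    simpa using (setIntegral_sum_mul_indicator_one_comp hPm measurable_id univ c).symm
  have hw1 : ∑ i, μ.real (P i) = 1 := by
    simpa using sum_measureReal_preimage_inter (μ := μ) hP hcover hPm measurable_id univ
  have key := abs_sum_mul_le_of_sum_mul_eq_zero (t := lam * μ.real s)
    (fun i => abs_le_iSup_abs_sum_mul_indicator_one hP hcover c (hP0 i)) hw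
    (fun i => (mul_right_comm lam _ _).trans_le (hmix i))
  rw [sum_measureReal_preimage_inter hP hcover hPm hg s, hw1] at key
  rw [setIntegral_sum_mul_indicator_one_comp hPm hg s c, abs_mul, abs_inv,
    abs_of_nonneg measureReal_nonneg]
  calc (μ.real s)⁻¹ * |∑ i, c i * μ.real (g ⁻¹' P i ∩ s)|
      ≤ (μ.real s)⁻¹ * (M * (μ.real s - lam * μ.real s * 1)) := by gcongr
    _ = (1 - lam) * M := by field_simp

end Partition

instance : IsProbabilityMeasure (volume : Measure UnitAddCircle) := ⟨UnitAddCircle.measure_univ⟩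

def dyadicArc (N : ℕ) (j : Fin (2 ^ N)) : Set UnitAddCircle :=
  (↑) '' Ico ((j : ℝ) / 2 ^ N) (((j : ℝ) + 1) / 2 ^ N)

section Dyadic

variable {N : ℕ}

lemma mem_Ico_div_two_pow_iff_floor_eq {x : ℝ} {j : ℕ} :
    x ∈ Ico ((j : ℝ) / 2 ^ N) (((j : ℝ) + 1) / 2 ^ N) ↔ ⌊x * 2 ^ N⌋ = j := by
  rw [Int.floor_eq_iff, mem_Ico, div_le_iff₀ (by positivity), lt_div_iff₀ (by positivity)]
  push_cast
  rfl

lemma Ico_div_two_pow_subset (j : Fin (2 ^ N)) :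
    Ico ((j : ℝ) / 2 ^ N) (((j : ℝ) + 1) / 2 ^ N) ⊆ Ico 0 1 := by
  have hj : (j : ℝ) + 1 ≤ 2 ^ N := by exact_mod_cast j.isLt
  refine Ico_subset_Ico (by positivity) ?_
  rwa [div_le_one (by positivity)]

lemma pairwise_disjoint_dyadicArc : Pairwise (Disjoint on dyadicArc N) := by
  intro j j' hjj'
  refine disjoint_left.2 ?_
  rintro _ ⟨x, hx, rfl⟩ ⟨x', hx', hxx'⟩
  rw [AddCircle.coe_eq_coe_iff_of_mem_Ico (a := 0) (by simpa using Ico_div_two_pow_subset j' hx')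
    (by simpa using Ico_div_two_pow_subset j hx)] at hxx'
  subst hxx'
  rw [mem_Ico_div_two_pow_iff_floor_eq] at hx hx'
  exact hjj' (Fin.ext (by exact_mod_cast hx.symm.trans hx'))

lemma iUnion_dyadicArc : ⋃ j, dyadicArc N j = univ := by
  refine eq_univ_of_forall fun p => mem_iUnion.2 ?_
  obtain ⟨x, hx, rfl⟩ := AddCircle.eq_coe_Ico p
  have h0 : 0 ≤ ⌊x * 2 ^ N⌋ := Int.floor_nonneg.2 (by have := hx.1; positivity)
  have hlt : ⌊x * 2 ^ N⌋ < ((2 ^ N : ℕ) : ℤ) :=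
    Int.floor_lt.2 (by push_cast; exact mul_lt_of_lt_one_left (by positivity) hx.2)
  refine ⟨⟨⌊x * 2 ^ N⌋.toNat, by omega⟩, x, ?_, rfl⟩
  rw [mem_Ico_div_two_pow_iff_floor_eq, Int.toNat_of_nonneg h0]

lemma measurableSet_dyadicArc (j : Fin (2 ^ N)) : MeasurableSet (dyadicArc N j) := by
  have hlt : (j : ℝ) / 2 ^ N < ((j : ℝ) + 1) / 2 ^ N := by gcongr; linarith
  rw [dyadicArc, ← Ioo_insert_left hlt, image_insert_eq]
  exact ((QuotientAddGroup.isOpenMap_coe _ isOpen_Ioo).measurableSet).insert _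

lemma volume_dyadicArc_pos (j : Fin (2 ^ N)) : 0 < volume (dyadicArc N j) := by
  have hlt : (j : ℝ) / 2 ^ N < ((j : ℝ) + 1) / 2 ^ N := by gcongr; linarith
  exact ((QuotientAddGroup.isOpenMap_coe _ isOpen_Ioo).measure_pos volume
    ((nonempty_Ioo.2 hlt).image _)).trans_le (measure_mono (image_mono Ioo_subset_Ico_self))

lemma dyadicSquare_eq_prod (j k : Fin (2 ^ N)) :
    dyadicSquare N j k = dyadicArc N j ×ˢ dyadicArc N k := by
  ext p
  constructor
  · rintro ⟨x, y, rfl, hx, hy⟩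
    exact ⟨⟨x, hx, rfl⟩, ⟨y, hy, rfl⟩⟩
  · rintro ⟨⟨x, hx, hpx⟩, ⟨y, hy, hpy⟩⟩
    exact ⟨x, y, Prod.ext hpx.symm hpy.symm, hx, hy⟩

lemma pairwise_disjoint_dyadicSquare :
    Pairwise (Disjoint on fun p : Fin (2 ^ N) × Fin (2 ^ N) => dyadicSquare N p.1 p.2) := by
  intro p q hpq
  simp only [onFun, dyadicSquare_eq_prod, disjoint_prod]
  by_cases h : p.1 = q.1
  · exact .inr (pairwise_disjoint_dyadicArc fun h' => hpq (Prod.ext h h'))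
  · exact .inl (pairwise_disjoint_dyadicArc h)

lemma iUnion_dyadicSquare : ⋃ p : Fin (2 ^ N) × Fin (2 ^ N), dyadicSquare N p.1 p.2 = univ := by
  simp only [dyadicSquare_eq_prod]
  rw [iUnion_prod, iUnion_dyadicArc, univ_prod_univ]

lemma measurableSet_dyadicSquare (j k : Fin (2 ^ N)) : MeasurableSet (dyadicSquare N j k) := by
  rw [dyadicSquare_eq_prod]
  exact (measurableSet_dyadicArc j).prod (measurableSet_dyadicArc k)

lemma volume_dyadicSquare_pos (j k : Fin (2 ^ N)) : 0 < volume (dyadicSquare N j k) := by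
  rw [dyadicSquare_eq_prod, Measure.volume_eq_prod, Measure.prod_prod]
  exact ENNReal.mul_pos (volume_dyadicArc_pos j).ne' (volume_dyadicArc_pos k).ne'

end Dyadic

theorem stmt15_general (T : Torus → Torus)
    (hT : MeasurePreserving T (volume : Measure Torus) volume)
    (N n : ℕ) (lam : ℝ)
    (hmix : ∀ j k j' k' : Fin (2 ^ N),
      lam * (volume (dyadicSquare N j k)).toReal *
        (volume (dyadicSquare N j' k')).toReal ≤
      (volume ((T^[n]) ⁻¹' (dyadicSquare N j k) ∩ dyadicSquare N j' k')).toReal)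
    (c : Fin (2 ^ N) → Fin (2 ^ N) → ℝ)
    (f : Torus → ℝ)
    (hf : f = fun z => ∑ j, ∑ k, c j k * Set.indicator (dyadicSquare N j k) 1 z)
    (hmean : ∫ z, f z = 0) :
    ∀ j k : Fin (2 ^ N),
      |(volume (dyadicSquare N j k)).toReal⁻¹ *
        ∫ z in dyadicSquare N j k, f (T^[n] z)| ≤
      (1 - lam) * ⨆ z : Torus, |f z| := by
  intro j k
  have hf' : f = fun z => ∑ p : Fin (2 ^ N) × Fin (2 ^ N),
      c p.1 p.2 * (dyadicSquare N p.1 p.2).indicator 1 z := by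
    simp only [hf, Fintype.sum_prod_type]
  rw [hf'] at hmean ⊢
  exact abs_setAverage_sum_mul_indicator_one_comp_le pairwise_disjoint_dyadicSquare
    iUnion_dyadicSquare (fun p => measurableSet_dyadicSquare p.1 p.2)
    (fun p => nonempty_of_measure_ne_zero (volume_dyadicSquare_pos p.1 p.2).ne')
    (hT.measurable.iterate n)
    (ENNReal.toReal_pos (volume_dyadicSquare_pos j k).ne' (measure_ne_top _ _)).ne'
    (fun p => hmix p.1 p.2 j k) (fun p => c p.1 p.2) hmean

/-- if `T` preserves Lebesgue measure, is invertible, and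
satisfies `m(T^{−n}(R) ∩ Q) ≥ λ m(R) m(Q)` for all dyadic squares `R, Q` of
side `2^{-N}`, then for any mean-zero simple function `f` constant on the
dyadic squares of side `2^{-N}`, the average of `f ∘ Tⁿ` over any such square
is at most `(1−λ)‖f‖_{L^∞}` in absolute value. -/
theorem stmt15 (T : Torus → Torus)
    (hT : MeasurePreserving T (volume : Measure Torus) volume)
    (hbij : Function.Bijective T)
    (N n : ℕ) (lam : ℝ) (hlam : lam ∈ Set.Ioo (0:ℝ) 1)
    (hmix : ∀ j k j' k' : Fin (2 ^ N),
      lam * (volume (dyadicSquare N j k)).toReal *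
        (volume (dyadicSquare N j' k')).toReal ≤
      (volume ((T^[n]) ⁻¹' (dyadicSquare N j k) ∩ dyadicSquare N j' k')).toReal)
    (c : Fin (2 ^ N) → Fin (2 ^ N) → ℝ)
    (f : Torus → ℝ)
    (hf : f = fun z => ∑ j, ∑ k, c j k * Set.indicator (dyadicSquare N j k) 1 z)
    (hmean : ∫ z, f z = 0) :
    ∀ j k : Fin (2 ^ N),
      |(volume (dyadicSquare N j k)).toReal⁻¹ *
        ∫ z in dyadicSquare N j k, f (T^[n] z)| ≤
      (1 - lam) * ⨆ z : Torus, |f z| :=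
  stmt15_general T hT N n lam hmix c f hf hmean
end

section
/- Let α ≥ 8C for an absolute constant C ≥ 1, and let A be a 2×2 invertible real matrix with unit eigenvectors e_u, e_s and eigenvalues λ, λ⁻¹ with |λ| ≥ 2, satisfying |e_x·e_s| ≤ C/α, |e_y·e_u| ≤ C/α, |e_x·e_u| ≥ 1 − C/α, |e_y·e_s| ≥ 1 − C/α, and |e_u·e_s| ≤ C/α, where e_x = (1,0), e_y = (0,1). Then |e_x · A e_y| / |e_x · A e_x| ≤ C'/α for some constant C' depending only on C. -/
open Matrix

/-- The Euclidean dot product on ℝ². -/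
def dot (v w : Fin 2 → ℝ) : ℝ := v 0 * w 0 + v 1 * w 1

/-! Expanding `e_x` and `e_y` in the eigenbasis, with `u = e_u`, `s = e_s` and
`d = u₀ s₁ - u₁ s₀ ≠ 0`, gives `d (A e_x)₀ = λ u₀ s₁ - λ⁻¹ u₁ s₀` and
`d (A e_y)₀ = u₀ s₀ (λ⁻¹ - λ)`. The first is of size `≈ |λ|` since `u₀, s₁ ≈ 1` and `u₁, s₀`
are small, while the second is at most `|s₀| · (5/4)|λ|` with `|s₀| ≤ C/α`; so the ratio is
`O(C/α)`. -/

theorem dot_one_zero (v : Fin 2 → ℝ) : dot ![1, 0] v = v 0 := by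
  simp [dot]

theorem dot_zero_one (v : Fin 2 → ℝ) : dot ![0, 1] v = v 1 := by
  simp [dot]

theorem abs_apply_zero_le_en (v : Fin 2 → ℝ) : |v 0| ≤ en v := by
  rw [en, ← Real.sqrt_sq_eq_abs]
  exact Real.sqrt_le_sqrt (le_add_of_nonneg_right (sq_nonneg _))

section Eigenbasis

variable {A : Matrix (Fin 2) (Fin 2) ℝ} {u s : Fin 2 → ℝ} {lam mu : ℝ}

theorem det_mul_mulVec_one_zero (hu : A *ᵥ u = lam • u) (hs : A *ᵥ s = mu • s) :
    (u 0 * s 1 - u 1 * s 0) * (A *ᵥ ![1, 0]) 0 = lam * (u 0 * s 1) - mu * (u 1 * s 0) := by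
  have hx : (u 0 * s 1 - u 1 * s 0) • ![(1 : ℝ), 0] = s 1 • u - u 1 • s := by
    ext i; fin_cases i <;> simp <;> ring
  rw [← smul_eq_mul, ← Pi.smul_apply, ← mulVec_smul, hx, mulVec_sub, mulVec_smul,
    mulVec_smul, hu, hs]
  simp only [Pi.sub_apply, Pi.smul_apply, smul_eq_mul]
  ring

theorem det_mul_mulVec_zero_one (hu : A *ᵥ u = lam • u) (hs : A *ᵥ s = mu • s) :
    (u 0 * s 1 - u 1 * s 0) * (A *ᵥ ![0, 1]) 0 = u 0 * s 0 * (mu - lam) := by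
  have hy : (u 0 * s 1 - u 1 * s 0) • ![(0 : ℝ), 1] = u 0 • s - s 0 • u := by
    ext i; fin_cases i <;> simp <;> ring
  rw [← smul_eq_mul, ← Pi.smul_apply, ← mulVec_smul, hy, mulVec_sub, mulVec_smul,
    mulVec_smul, hu, hs]
  simp only [Pi.sub_apply, Pi.smul_apply, smul_eq_mul]
  ring

theorem abs_mulVec_zero_one_div_abs_mulVec_one_zero (hu : A *ᵥ u = lam • u)
    (hs : A *ᵥ s = mu • s) (hdet : u 0 * s 1 - u 1 * s 0 ≠ 0) :
    |(A *ᵥ ![0, 1]) 0| / |(A *ᵥ ![1, 0]) 0| =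
      |u 0 * s 0 * (mu - lam)| / |lam * (u 0 * s 1) - mu * (u 1 * s 0)| := by
  rw [← det_mul_mulVec_one_zero hu hs, ← det_mul_mulVec_zero_one hu hs, abs_mul, abs_mul,
    mul_div_mul_left _ _ (abs_ne_zero.mpr hdet)]

end Eigenbasis

theorem abs_inv_le_half {lam : ℝ} (hlam : 2 ≤ |lam|) : |lam⁻¹| ≤ 1 / 2 := by
  rw [abs_inv]
  exact inv_le_of_inv_le₀ (by norm_num) (by linarith)

theorem abs_inv_sub_self_le {lam : ℝ} (hlam : 2 ≤ |lam|) : |lam⁻¹ - lam| ≤ 5 / 4 * |lam| := by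
  linarith [abs_sub lam⁻¹ lam, abs_inv_le_half hlam]

theorem le_abs_mul_sub_inv_mul {lam p q : ℝ} (hlam : 2 ≤ |lam|) (hp : 49 / 64 ≤ |p|)
    (hq : |q| ≤ 1 / 64) : 3 / 4 * |lam| ≤ |lam * p - lam⁻¹ * q| := by
  have hq' : |lam⁻¹ * q| ≤ 1 / 2 * (1 / 64) := by
    rw [abs_mul]; exact mul_le_mul (abs_inv_le_half hlam) hq (abs_nonneg _) (by norm_num)
  have hp' : |lam| * (49 / 64) ≤ |lam * p| := by
    rw [abs_mul]; exact mul_le_mul_of_nonneg_left hp (abs_nonneg _)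
  linarith [abs_sub_abs_le_abs_sub (lam * p) (lam⁻¹ * q)]

section NearAxes

variable {t a b c d : ℝ}

theorem le_abs_mul_of_one_sub_le (ht : t ≤ 1 / 8) (ha : 1 - t ≤ |a|) (hd : 1 - t ≤ |d|) :
    49 / 64 ≤ |a * d| := by
  rw [abs_mul]
  nlinarith [abs_nonneg a]

theorem abs_mul_le_of_abs_le (ht : t ≤ 1 / 8) (hb : |b| ≤ t) (hc : |c| ≤ t) :
    |b * c| ≤ 1 / 64 := by
  rw [abs_mul]
  nlinarith [abs_nonneg b, abs_nonneg c]

theorem mul_sub_mul_ne_zero_of_near_axes (ht : t ≤ 1 / 8) (ha : 1 - t ≤ |a|) (hb : |b| ≤ t)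
    (hc : |c| ≤ t) (hd : 1 - t ≤ |d|) : a * d - b * c ≠ 0 := by
  intro h
  have := abs_sub_abs_le_abs_sub (a * d) (b * c)
  rw [h, abs_zero] at this
  linarith [le_abs_mul_of_one_sub_le ht ha hd, abs_mul_le_of_abs_le ht hb hc]

theorem abs_mul_mul_inv_sub_div_le (ht : t ≤ 1 / 8) (ha : 1 - t ≤ |a|) (ha' : |a| ≤ 1)
    (hb : |b| ≤ t) (hc : |c| ≤ t) (hd : 1 - t ≤ |d|) {lam : ℝ} (hlam : 2 ≤ |lam|) :
    |a * c * (lam⁻¹ - lam)| / |lam * (a * d) - lam⁻¹ * (b * c)| ≤ 2 * t := by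
  have ht0 : 0 ≤ t := (abs_nonneg c).trans hc
  have hN : |a * c * (lam⁻¹ - lam)| ≤ 5 / 4 * |lam| * t :=
    calc |a * c * (lam⁻¹ - lam)| = |a| * |c| * |lam⁻¹ - lam| := by rw [abs_mul, abs_mul]
      _ ≤ 1 * t * (5 / 4 * |lam|) := by gcongr; exact abs_inv_sub_self_le hlam
      _ = 5 / 4 * |lam| * t := by ring
  have hD := le_abs_mul_sub_inv_mul hlam (le_abs_mul_of_one_sub_le ht ha hd)
    (abs_mul_le_of_abs_le ht hb hc)
  calc _ ≤ 5 / 4 * |lam| * t / (3 / 4 * |lam|) :=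
        div_le_div₀ (by positivity) hN (by positivity) hD
    _ ≤ 2 * t := by
        rw [div_le_iff₀ (by positivity)]
        nlinarith [abs_nonneg lam]

end NearAxes

/-- key cross-derivative estimate: if `A` is invertible with
unit eigenvectors `e_u, e_s` and eigenvalues `λ, λ⁻¹`, `|λ| ≥ 2`, and the
eigenvectors are nearly aligned with the coordinate axes (`|e_x·e_s| ≤ C/α`,
`|e_y·e_u| ≤ C/α`, `|e_x·e_u| ≥ 1 − C/α`, `|e_y·e_s| ≥ 1 − C/α`,
`|e_u·e_s| ≤ C/α`), then `|e_x·A e_y| / |e_x·A e_x| ≤ C'/α` for a constant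
`C'` depending only on `C`, provided `α ≥ 8C`. -/
theorem stmt19 (C : ℝ) (hC : 1 ≤ C) :
    ∃ C' > (0:ℝ), ∀ α : ℝ, 8 * C ≤ α →
    ∀ (A : Matrix (Fin 2) (Fin 2) ℝ) (eu es : Fin 2 → ℝ) (lam : ℝ),
      IsUnit A →
      en eu = 1 → en es = 1 →
      A.mulVec eu = lam • eu → A.mulVec es = lam⁻¹ • es →
      2 ≤ |lam| →
      |dot ![1, 0] es| ≤ C / α →
      |dot ![0, 1] eu| ≤ C / α →
      1 - C / α ≤ |dot ![1, 0] eu| →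
      1 - C / α ≤ |dot ![0, 1] es| →
      |dot eu es| ≤ C / α →
      |dot ![1, 0] (A.mulVec ![0, 1])| / |dot ![1, 0] (A.mulVec ![1, 0])| ≤
        C' / α := by
  refine ⟨2 * C, by positivity, fun α hα A eu es lam _ heu _ hAeu hAes hlam hxs hyu hxu hys _ => ?_⟩
  simp only [dot_one_zero, dot_zero_one] at hxs hyu hxu hys ⊢
  have ht : C / α ≤ 1 / 8 := by rw [div_le_iff₀ (by linarith)]; linarith
  rw [mul_div_assoc, abs_mulVec_zero_one_div_abs_mulVec_one_zero hAeu hAes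
    (mul_sub_mul_ne_zero_of_near_axes ht hxu hyu hxs hys)]
  exact abs_mul_mul_inv_sub_div_le ht hxu (heu ▸ abs_apply_zero_le_en eu) hyu hxs hys hlam
end
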